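/- arXiv:1611.09513 — 4 statements merged into one kernel-verified Lean document; each statement's English description precedes it below -/
import Mathlib

section
/- For every real number t and every vector x = (x₁,x₂,x₃) ∈ ℝ³, the real symmetric 3×3 matrix Φ_t(xxᵀ), whose (1,1), (2,2), (3,3) entries are (t²−1)²x₁²+x₂²+t⁴x₃², (t²−1)²x₂²+x₃²+t⁴x₁², (t²−1)²x₃²+x₁²+t⁴x₂² respectively, and whose (i,j) entry for i ≠ j is −(t⁴−t²+1)xᵢxⱼ, is positive semidefinite. -/
open Matrix

/-- The map `Φ_t` applied to a `3 × 3` matrix `A`. -/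
def Phi (t : ℝ) (A : Matrix (Fin 3) (Fin 3) ℝ) : Matrix (Fin 3) (Fin 3) ℝ :=
  !![(t^2-1)^2 * A 0 0 + A 1 1 + t^4 * A 2 2, -(t^4-t^2+1) * A 0 1, -(t^4-t^2+1) * A 0 2;
     -(t^4-t^2+1) * A 1 0, (t^2-1)^2 * A 1 1 + A 2 2 + t^4 * A 0 0, -(t^4-t^2+1) * A 1 2;
     -(t^4-t^2+1) * A 2 0, -(t^4-t^2+1) * A 2 1, (t^2-1)^2 * A 2 2 + A 0 0 + t^4 * A 1 1]

/-!
With `s = t²` and `k = s² - s + 1`, the matrix `Φ_t(xxᵀ)` is `G - k xxᵀ` for a diagonal matrix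
`G = diag(g)` with `g ≥ 0`. By weighted Cauchy–Schwarz, `G - k xxᵀ` is positive semidefinite as
soon as `k ∑ xᵢ² / gᵢ ≤ 1`. Clearing denominators, this is `det(G - k xxᵀ) ≥ 0`, and the
determinant factors as `(1 - s)²` times a cyclic cubic form in `x₀², x₁², x₂²`; after a cyclic
rotation putting the smallest variable last, that cubic is an explicit sum of nonnegative terms.
-/

theorem posSemidef_diagonal_sub_smul_vecMulVec {n : Type*} [Fintype n] [DecidableEq n]
    {g x : n → ℝ} {k : ℝ} (hg : ∀ i, 0 ≤ g i) (hgx : ∀ i, g i = 0 → x i = 0) (hk : 0 ≤ k)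
    (h : k * ∑ i, x i ^ 2 / g i ≤ 1) :
    (diagonal g - k • vecMulVec x x).PosSemidef := by
  rw [posSemidef_iff_dotProduct_mulVec]
  refine ⟨by simp [IsHermitian, transpose_vecMulVec], fun v => ?_⟩
  have hdiag : v ⬝ᵥ (diagonal g *ᵥ v) = ∑ i, g i * v i ^ 2 := by
    simp only [dotProduct, mulVec_diagonal]
    exact Finset.sum_congr rfl fun i _ => by ring
  have hrank : v ⬝ᵥ (vecMulVec x x *ᵥ v) = (x ⬝ᵥ v) ^ 2 := by
    rw [vecMulVec_mulVec, op_smul_eq_smul, dotProduct_smul, dotProduct_comm, smul_eq_mul, sq]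
  have hcs : (x ⬝ᵥ v) ^ 2 ≤ (∑ i, x i ^ 2 / g i) * ∑ i, g i * v i ^ 2 := by
    refine Finset.sum_sq_le_sum_mul_sum_of_sq_le_mul _ (fun i _ => by have := hg i; positivity)
      (fun i _ => mul_nonneg (hg i) (sq_nonneg _)) (fun i _ => le_of_eq ?_)
    rcases eq_or_ne (g i) 0 with hgi | hgi
    · simp [hgx i hgi]
    · field_simp
  have hgv : 0 ≤ ∑ i, g i * v i ^ 2 :=
    Finset.sum_nonneg fun i _ => mul_nonneg (hg i) (sq_nonneg _)
  rw [star_trivial, sub_mulVec, smul_mulVec, dotProduct_sub, dotProduct_smul, hdiag, hrank,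
    smul_eq_mul]
  nlinarith [mul_le_mul_of_nonneg_left hcs hk, mul_le_mul_of_nonneg_right h hgv]

def choiCubic (s X Y Z : ℝ) : ℝ :=
  (1 - 2 * s ^ 3) * (X ^ 2 * Z + X * Y ^ 2 + Y * Z ^ 2 - 3 * X * Y * Z)
    + s * (s ^ 3 - 2) * (X ^ 2 * Y + Y ^ 2 * Z + Z ^ 2 * X - 3 * X * Y * Z)
    + s ^ 2 * (X ^ 3 + Y ^ 3 + Z ^ 3 - 3 * X * Y * Z)

theorem choiCubic_rotate (s X Y Z : ℝ) : choiCubic s X Y Z = choiCubic s Y Z X := by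
  unfold choiCubic; ring

theorem choiCubic_nonneg_of_le {s X Y Z : ℝ} (hZ : 0 ≤ Z) (hZX : Z ≤ X) (hZY : Z ≤ Y) :
    0 ≤ choiCubic s X Y Z := by
  obtain ⟨b, hb, rfl⟩ : ∃ b ≥ 0, X = Z + b := ⟨X - Z, by linarith, by ring⟩
  obtain ⟨c, hc, rfl⟩ : ∃ c ≥ 0, Y = Z + c := ⟨Y - Z, by linarith, by ring⟩
  rcases le_total c b with hcb | hbc
  · obtain ⟨a, ha, rfl⟩ : ∃ a ≥ 0, b = c + a := ⟨b - c, by linarith, by ring⟩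
    have hsos : choiCubic s (Z + (c + a)) (Z + c) Z
        = (s ^ 2 - s + 1) ^ 2 * Z * (a ^ 2 + a * c + c ^ 2)
          + (s * a - (1 - s) * c) ^ 2 * (a + (s ^ 2 + 1) * c) := by
      unfold choiCubic; ring
    rw [hsos]; positivity
  · obtain ⟨a, ha, rfl⟩ : ∃ a ≥ 0, c = b + a := ⟨c - b, by linarith, by ring⟩
    have hsos : choiCubic s (Z + b) (Z + (b + a)) Z
        = (s ^ 2 - s + 1) ^ 2 * Z * (a ^ 2 + a * b + b ^ 2)
          + (a - (s - 1) * b) ^ 2 * (s ^ 2 * a + (s ^ 2 + 1) * b) := by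
      unfold choiCubic; ring
    rw [hsos]; positivity

theorem choiCubic_nonneg {s X Y Z : ℝ} (hX : 0 ≤ X) (hY : 0 ≤ Y) (hZ : 0 ≤ Z) :
    0 ≤ choiCubic s X Y Z := by
  have h₁ := choiCubic_rotate s X Y Z
  have h₂ := choiCubic_rotate s Y Z X
  rcases le_total Z X with hZX | hXZ <;> rcases le_total Z Y with hZY | hYZ
  · exact choiCubic_nonneg_of_le hZ hZX hZY
  · rw [h₁, h₂]; exact choiCubic_nonneg_of_le hY hYZ (hYZ.trans hZX)
  · rw [h₁]; exact choiCubic_nonneg_of_le hX (hXZ.trans hZY) hXZ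
  · rcases le_total X Y with hXY | hYX
    · rw [h₁]; exact choiCubic_nonneg_of_le hX hXY hXZ
    · rw [h₁, h₂]; exact choiCubic_nonneg_of_le hY hYZ hYX

theorem sq_sub_self_add_one_pos (s : ℝ) : 0 < s ^ 2 - s + 1 := by
  nlinarith [sq_nonneg (2 * s - 1)]

def choiWeight (s : ℝ) (x : Fin 3 → ℝ) (i : Fin 3) : ℝ :=
  (2 * s ^ 2 - 3 * s + 2) * x i ^ 2 + x (i + 1) ^ 2 + s ^ 2 * x (i + 2) ^ 2

theorem mul_sq_le_choiWeight (s : ℝ) (x : Fin 3 → ℝ) (i : Fin 3) :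
    (s ^ 2 - s + 1) * x i ^ 2 ≤ choiWeight s x i := by
  unfold choiWeight
  nlinarith [sq_nonneg ((s - 1) * x i), sq_nonneg (x (i + 1)), sq_nonneg (s * x (i + 2))]

theorem choiWeight_nonneg (s : ℝ) (x : Fin 3 → ℝ) (i : Fin 3) : 0 ≤ choiWeight s x i :=
  (mul_nonneg (sq_sub_self_add_one_pos s).le (sq_nonneg _)).trans (mul_sq_le_choiWeight s x i)

theorem choiWeight_eq_zero {s : ℝ} {x : Fin 3 → ℝ} {i : Fin 3} (h : choiWeight s x i = 0) :
    x i = 0 ∧ x (i + 1) = 0 := by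
  unfold choiWeight at h
  have hk := sq_sub_self_add_one_pos s
  constructor <;> refine (pow_eq_zero_iff two_ne_zero).mp ?_ <;>
    nlinarith [sq_nonneg ((s - 1) * x i), sq_nonneg (x i), sq_nonneg (x (i + 1)),
      sq_nonneg (s * x (i + 2)), mul_nonneg hk.le (sq_nonneg (x i))]

/-- By the matrix determinant lemma, the left side is `det(diag(g) - (s² - s + 1) xxᵀ)`
for `g = choiWeight s x`. -/
theorem choiWeight_det (s : ℝ) (x : Fin 3 → ℝ) :
    choiWeight s x 0 * choiWeight s x 1 * choiWeight s x 2
      - (s ^ 2 - s + 1) * (x 0 ^ 2 * choiWeight s x 1 * choiWeight s x 2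
        + choiWeight s x 0 * x 1 ^ 2 * choiWeight s x 2
        + choiWeight s x 0 * choiWeight s x 1 * x 2 ^ 2)
      = (1 - s) ^ 2 * choiCubic s (x 0 ^ 2) (x 1 ^ 2) (x 2 ^ 2) := by
  simp only [choiWeight, choiCubic, Fin.isValue, Fin.reduceAdd]
  ring

theorem sum_sq_div_choiWeight_le (s : ℝ) (x : Fin 3 → ℝ) :
    (s ^ 2 - s + 1) * ∑ i, x i ^ 2 / choiWeight s x i ≤ 1 := by
  by_cases hdeg : ∃ i, choiWeight s x i = 0
  · obtain ⟨i, hi⟩ := hdeg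
    obtain ⟨h₀, h₁⟩ := choiWeight_eq_zero hi
    have hsum : ∑ j, x j ^ 2 / choiWeight s x j = x (i + 2) ^ 2 / choiWeight s x (i + 2) := by
      fin_cases i <;> simp_all [Fin.sum_univ_three]
    rw [hsum, mul_div_assoc']
    exact div_le_one_of_le₀ (mul_sq_le_choiWeight s x _) (choiWeight_nonneg s x _)
  · push Not at hdeg
    have hpos i : 0 < choiWeight s x i := (choiWeight_nonneg s x i).lt_of_ne' (hdeg i)
    rw [Fin.sum_univ_three, div_add_div _ _ (hdeg 0) (hdeg 1),
      div_add_div _ _ (mul_pos (hpos 0) (hpos 1)).ne' (hdeg 2), mul_div_assoc',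
      div_le_one (mul_pos (mul_pos (hpos 0) (hpos 1)) (hpos 2))]
    have hcubic : 0 ≤ choiCubic s (x 0 ^ 2) (x 1 ^ 2) (x 2 ^ 2) :=
      choiCubic_nonneg (sq_nonneg _) (sq_nonneg _) (sq_nonneg _)
    linarith [choiWeight_det s x, mul_nonneg (sq_nonneg (1 - s)) hcubic]

theorem Phi_vecMulVec_eq (t : ℝ) (x : Fin 3 → ℝ) :
    Phi t (vecMulVec x x)
      = diagonal (choiWeight (t ^ 2) x) - ((t ^ 2) ^ 2 - t ^ 2 + 1) • vecMulVec x x := by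
  ext i j
  fin_cases i <;> fin_cases j <;> simp [Phi, choiWeight, vecMulVec_apply] <;> ring

/-- For every real `t` and every `x ∈ ℝ³`, the matrix `Φ_t(xxᵀ)` is positive semidefinite. -/
theorem phi_vecMulVec_posSemidef (t : ℝ) (x : Fin 3 → ℝ) :
    (Phi t (vecMulVec x x)).PosSemidef := by
  rw [Phi_vecMulVec_eq]
  exact posSemidef_diagonal_sub_smul_vecMulVec (choiWeight_nonneg _ x)
    (fun _ hi => (choiWeight_eq_zero hi).1) (sq_sub_self_add_one_pos _).le
    (sum_sq_div_choiWeight_le _ x)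
end

section
/- For every real number t, the linear map Φ_t is positive: for every positive semidefinite real symmetric 3×3 matrix A, the matrix Φ_t(A) is positive semidefinite. -/
/-!
For a test vector `x`, `xᵀ Φ_t(A) x = ∑ᵢⱼ Aᵢⱼ Dᵢⱼ` where `D = Φ_t^*(x xᵀ)` is `phiDual t x`,
i.e. the sum of the entries of the Hadamard product `A ⊙ D`; by the Schur product theorem it
suffices that `D` is positive semidefinite, which we check on its principal minors. Its diagonal
entries and `2 × 2` minors are sums of squares, and `det D = (t² - 1)² · C(x₀², x₁², x₂²)` for a
cyclic cubic `C`; after a cyclic rotation putting the largest argument first, `C` is a sum of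
products of nonnegative factors.
-/

open Matrix

lemma binary_quadratic_nonneg_of_minors {p q r : ℝ} (hp : 0 ≤ p) (hq : 0 ≤ q)
    (hpq : r ^ 2 ≤ p * q) (w z : ℝ) : 0 ≤ p * w ^ 2 + 2 * r * w * z + q * z ^ 2 := by
  rcases hp.eq_or_lt with rfl | hp
  · obtain rfl : r = 0 := by nlinarith
    nlinarith [mul_nonneg hq (sq_nonneg z)]
  · nlinarith [sq_nonneg (p * w + r * z), mul_nonneg (sub_nonneg.2 hpq) (sq_nonneg z)]

lemma ternary_quadratic_nonneg_of_minors {a b c d e f : ℝ}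
    (ha : 0 ≤ a) (hb : 0 ≤ b) (hc : 0 ≤ c)
    (hab : d ^ 2 ≤ a * b) (hac : e ^ 2 ≤ a * c) (hbc : f ^ 2 ≤ b * c)
    (hdet : 0 ≤ a * b * c + 2 * d * e * f - a * f ^ 2 - b * e ^ 2 - c * d ^ 2) (x y z : ℝ) :
    0 ≤ a * x ^ 2 + b * y ^ 2 + c * z ^ 2 + 2 * d * x * y + 2 * e * x * z + 2 * f * y * z := by
  rcases ha.eq_or_lt with rfl | ha
  · obtain rfl : d = 0 := by nlinarith
    obtain rfl : e = 0 := by nlinarith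
    nlinarith [binary_quadratic_nonneg_of_minors hb hc hbc y z]
  · -- completing the square in `x`: `a Q = (a x + d y + e z)² + (a binary form in y, z)`
    have hschur : (a * f - d * e) ^ 2 ≤ (a * b - d ^ 2) * (a * c - e ^ 2) := by
      nlinarith [mul_nonneg ha.le hdet]
    have := binary_quadratic_nonneg_of_minors (sub_nonneg.2 hab) (sub_nonneg.2 hac) hschur y z
    nlinarith [sq_nonneg (a * x + d * y + e * z)]

theorem Matrix.posSemidef_fin_three_of_minors {M : Matrix (Fin 3) (Fin 3) ℝ}
    (hM : M.IsHermitian) (h₀ : 0 ≤ M 0 0) (h₁ : 0 ≤ M 1 1) (h₂ : 0 ≤ M 2 2)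
    (h₀₁ : M 0 1 ^ 2 ≤ M 0 0 * M 1 1) (h₀₂ : M 0 2 ^ 2 ≤ M 0 0 * M 2 2)
    (h₁₂ : M 1 2 ^ 2 ≤ M 1 1 * M 2 2) (hdet : 0 ≤ M.det) : M.PosSemidef := by
  refine .of_dotProduct_mulVec_nonneg hM fun x => ?_
  have hsymm (i j : Fin 3) : M j i = M i j := by simpa using congrFun₂ hM i j
  rw [det_fin_three, hsymm 0 1, hsymm 0 2, hsymm 1 2] at hdet
  have := ternary_quadratic_nonneg_of_minors h₀ h₁ h₂ h₀₁ h₀₂ h₁₂ (by linear_combination hdet)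
    (x 0) (x 1) (x 2)
  simp only [star_trivial, dotProduct, mulVec, Fin.sum_univ_three, hsymm 0 1, hsymm 0 2, hsymm 1 2]
  linear_combination this

def cyclicCubic (s a b c : ℝ) : ℝ :=
  s ^ 2 * (a ^ 3 + b ^ 3 + c ^ 3) + (1 - 2 * s ^ 3) * (a ^ 2 * b + b ^ 2 * c + c ^ 2 * a)
    + (s ^ 4 - 2 * s) * (a * b ^ 2 + b * c ^ 2 + c * a ^ 2)
    - 3 * (s ^ 4 - 2 * s ^ 3 + s ^ 2 - 2 * s + 1) * (a * b * c)

lemma cyclicCubic_rotate (s a b c : ℝ) : cyclicCubic s a b c = cyclicCubic s b c a := by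
  unfold cyclicCubic; ring

lemma cyclicCubic_nonneg_of_max {s a b c : ℝ} (hb : 0 ≤ b) (hc : 0 ≤ c) (hba : b ≤ a)
    (hca : c ≤ a) : 0 ≤ cyclicCubic s a b c := by
  rcases le_total c b with hcb | hbc
  · have hsos : cyclicCubic s a b c =
        (s ^ 2 - s + 1) ^ 2 * c * ((a - b) ^ 2 + (a - b) * (b - c) + (b - c) ^ 2)
          + ((a - b) - (s - 1) * (b - c)) ^ 2 * (s ^ 2 * (a - b) + (s ^ 2 + 1) * (b - c)) := by
      unfold cyclicCubic; ring
    have := sub_nonneg.2 hba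
    have := sub_nonneg.2 hcb
    rw [hsos]; positivity
  · have hsos : cyclicCubic s a b c =
        (s ^ 2 - s + 1) ^ 2 * b * ((c - b) ^ 2 + (c - b) * (a - c) + (a - c) ^ 2)
          + ((1 - s) * (c - b) - s * (a - c)) ^ 2 * ((s ^ 2 + 1) * (c - b) + (a - c)) := by
      unfold cyclicCubic; ring
    have := sub_nonneg.2 hca
    have := sub_nonneg.2 hbc
    rw [hsos]; positivity

lemma cyclicCubic_nonneg (s : ℝ) {a b c : ℝ} (ha : 0 ≤ a) (hb : 0 ≤ b) (hc : 0 ≤ c) :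
    0 ≤ cyclicCubic s a b c := by
  rcases le_total b a with hba | hab
  · rcases le_total c a with hca | hac
    · exact cyclicCubic_nonneg_of_max hb hc hba hca
    · rw [← cyclicCubic_rotate]
      exact cyclicCubic_nonneg_of_max ha hb hac (hba.trans hac)
  · rcases le_total c b with hcb | hbc
    · rw [cyclicCubic_rotate]
      exact cyclicCubic_nonneg_of_max hc ha hcb hab
    · rw [← cyclicCubic_rotate]
      exact cyclicCubic_nonneg_of_max ha hb (hab.trans hbc) hbc

def phiDual (t : ℝ) (x : Fin 3 → ℝ) : Matrix (Fin 3) (Fin 3) ℝ :=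
  !![(t^2-1)^2 * x 0^2 + t^4 * x 1^2 + x 2^2, -(t^4-t^2+1) * x 0 * x 1, -(t^4-t^2+1) * x 0 * x 2;
     -(t^4-t^2+1) * x 1 * x 0, (t^2-1)^2 * x 1^2 + t^4 * x 2^2 + x 0^2, -(t^4-t^2+1) * x 1 * x 2;
     -(t^4-t^2+1) * x 2 * x 0, -(t^4-t^2+1) * x 2 * x 1, (t^2-1)^2 * x 2^2 + t^4 * x 0^2 + x 1^2]

lemma phiDual_minor (t x y z : ℝ) : (-(t^4-t^2+1) * x * y) ^ 2 ≤
    ((t^2-1)^2 * x^2 + t^4 * y^2 + z^2) * ((t^2-1)^2 * y^2 + t^4 * z^2 + x^2) := by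
  linear_combination sq_nonneg ((t^2-1) * (x^2 - t^2 * y^2)) + sq_nonneg ((t^2-1) * t^2 * x * z)
    + sq_nonneg (t^4 * y * z) + sq_nonneg ((t^2-1) * y * z) + sq_nonneg (t^2 * z^2) + sq_nonneg (x * z)

lemma det_phiDual (t : ℝ) (x : Fin 3 → ℝ) :
    (phiDual t x).det = (t^2-1)^2 * cyclicCubic (t^2) (x 0^2) (x 1^2) (x 2^2) := by
  simp only [phiDual, det_fin_three, of_apply, cons_val', cons_val_zero, cons_val_one,
    cons_val_two, head_cons, tail_cons, empty_val', cons_val_fin_one, head_fin_const]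
  unfold cyclicCubic; ring

lemma phiDual_posSemidef (t : ℝ) (x : Fin 3 → ℝ) : (phiDual t x).PosSemidef := by
  refine posSemidef_fin_three_of_minors ?herm ?_ ?_ ?_ ?_ ?_ ?_ ?det
  case herm => ext i j; fin_cases i <;> fin_cases j <;> simp [phiDual] <;> ring
  case det =>
    rw [det_phiDual]
    exact mul_nonneg (sq_nonneg _) (cyclicCubic_nonneg _ (sq_nonneg _) (sq_nonneg _) (sq_nonneg _))
  all_goals simp only [phiDual, of_apply, cons_val', cons_val_zero, cons_val_one,
    cons_val_two, head_cons, tail_cons, empty_val', cons_val_fin_one, head_fin_const]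
  any_goals positivity
  · exact phiDual_minor t (x 0) (x 1) (x 2)
  · linear_combination phiDual_minor t (x 2) (x 0) (x 1)
  · exact phiDual_minor t (x 1) (x 2) (x 0)

lemma dotProduct_Phi_mulVec_eq_hadamard (t : ℝ) (A : Matrix (Fin 3) (Fin 3) ℝ) (x : Fin 3 → ℝ) :
    star x ⬝ᵥ (Phi t A *ᵥ x) = star 1 ⬝ᵥ ((A ⊙ phiDual t x) *ᵥ 1) := by
  simp only [Phi, phiDual, star_trivial, dotProduct, mulVec, hadamard_apply, Fin.sum_univ_three,
    of_apply, cons_val', cons_val_zero, cons_val_one, cons_val_two, head_cons, tail_cons,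
    empty_val', cons_val_fin_one, head_fin_const, Pi.one_apply]
  ring

lemma Phi_transpose (t : ℝ) (A : Matrix (Fin 3) (Fin 3) ℝ) : (Phi t A)ᵀ = Phi t Aᵀ := by
  ext i j; fin_cases i <;> fin_cases j <;> simp [Phi]

/-- For every real `t`, the map `Φ_t` is positive: it sends every positive semidefinite real
symmetric `3 × 3` matrix to a positive semidefinite matrix. -/
theorem phi_positive (t : ℝ) (A : Matrix (Fin 3) (Fin 3) ℝ) (hA : A.PosSemidef) :
    (Phi t A).PosSemidef := by
  have hsymm : (Phi t A).IsHermitian := by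
    rw [IsHermitian, conjTranspose_eq_transpose_of_trivial, Phi_transpose,
      ← conjTranspose_eq_transpose_of_trivial, hA.isHermitian.eq]
  refine .of_dotProduct_mulVec_nonneg hsymm fun x => ?_
  rw [dotProduct_Phi_mulVec_eq_hadamard]
  exact (hA.hadamard (phiDual_posSemidef t x)).dotProduct_mulVec_nonneg 1
end

section
/- For every real number t and every x = (x₁,x₂,x₃) ∈ ℝ³, the determinant of the matrix Φ_t(xxᵀ) equals (t²−1)²·( t⁴(x₁⁶+x₂⁶+x₃⁶) + (t⁸−2t²)(x₁⁴x₂²+x₂⁴x₃²+x₃⁴x₁²) + (1−2t⁶)(x₁²x₂⁴+x₂²x₃⁴+x₃²x₁⁴) − 3(t⁸−2t⁶+t⁴−2t²+1)x₁²x₂²x₃² ). -/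
open Matrix

/-!
`Φ_t(xxᵀ)` is a diagonal matrix plus the rank-one matrix `-(t⁴-t²+1) xxᵀ`, so by the matrix
determinant lemma its determinant is `d₀d₁d₂ - (t⁴-t²+1) (x₀²d₁d₂ + x₁²d₀d₂ + x₂²d₀d₁)` in terms
of the diagonal entries `dᵢ`; expanding this gives the claim.
-/

theorem Matrix.det_diagonal_add_vecMulVec_fin_three {R : Type*} [CommRing R]
    (d u v : Fin 3 → R) :
    (diagonal d + vecMulVec u v).det =
      d 0 * d 1 * d 2 + u 0 * v 0 * d 1 * d 2 + u 1 * v 1 * d 0 * d 2 + u 2 * v 2 * d 0 * d 1 := by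
  rw [det_fin_three]
  simp only [add_apply, diagonal_apply, vecMulVec_apply, Fin.reduceEq, ↓reduceIte, zero_add]
  ring

/-- `2t⁴ - 3t² + 2 = (t² - 1)² + (t⁴ - t² + 1)` compensates the rank-one part on the diagonal;
indices are cyclic since `Fin 3` addition wraps around. -/
def phiDiag (t : ℝ) (x : Fin 3 → ℝ) (i : Fin 3) : ℝ :=
  (2 * t^4 - 3 * t^2 + 2) * x i ^ 2 + x (i + 1) ^ 2 + t^4 * x (i + 2) ^ 2

theorem phi_vecMulVec (t : ℝ) (x : Fin 3 → ℝ) :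
    Phi t (vecMulVec x x) = diagonal (phiDiag t x) + vecMulVec (-(t^4 - t^2 + 1) • x) x := by
  ext i j
  fin_cases i <;> fin_cases j <;> simp [Phi, phiDiag, vecMulVec_apply] <;> ring

/-- The determinant of `Φ_t(xxᵀ)` equals `(t²-1)²` times the generalized Robinson
polynomial `S_t`. -/
theorem det_phi_vecMulVec (t : ℝ) (x : Fin 3 → ℝ) :
    (Phi t (vecMulVec x x)).det =
      (t^2-1)^2 * (t^4 * (x 0^6 + x 1^6 + x 2^6)
        + (t^8 - 2*t^2) * (x 0^4 * x 1^2 + x 1^4 * x 2^2 + x 2^4 * x 0^2)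
        + (1 - 2*t^6) * (x 0^2 * x 1^4 + x 1^2 * x 2^4 + x 2^2 * x 0^4)
        - 3 * (t^8 - 2*t^6 + t^4 - 2*t^2 + 1) * x 0^2 * x 1^2 * x 2^2) := by
  rw [phi_vecMulVec, det_diagonal_add_vecMulVec_fin_three]
  simp only [phiDiag, Fin.reduceAdd, Pi.smul_apply, smul_eq_mul]
  ring
end

section
/- Let t ∈ ℝ with t ∉ {−1,0,1}. For a nonzero vector x ∈ ℝ³, the determinant of Φ_t(xxᵀ) equals zero if and only if x is a nonzero scalar multiple of one of the ten vectors (1,1,1), (1,1,−1), (1,−1,1), (−1,1,1), (1,t,0), (1,−t,0), (0,1,t), (0,1,−t), (t,0,1), (−t,0,1). -/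
open Matrix

/-!
`Φ_t(xxᵀ)` depends on `x` only through `p = x₀²`, `q = x₁²`, `r = x₂²`, and its determinant is
`(t² - 1)²` times a cyclic cubic form `C(u; p, q, r)` in these squares, with `u = t²`.
On the face `r = 0` the cubic is `(u p - q)² (p + u² q)`. In the open orthant one uses that
`2 (p + q + r) C` is a sum of squares containing the terms `p q ℓ(p, q, r)²`, `q r ℓ(q, r, p)²`,
`r p ℓ(r, p, q)²` with `ℓ(p, q, r) = q - u p + (u - 1) r`; two of these linear forms vanishing
forces `p = q = r`. Extracting square roots with signs then produces the ten vectors.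
-/

def phiCubic (u p q r : ℝ) : ℝ :=
  u^2 * (p^3 + q^3 + r^3) + (u^4 - 2*u) * (p^2*q + q^2*r + r^2*p)
    + (1 - 2*u^3) * (p*q^2 + q*r^2 + r*p^2) - 3 * (u^4 - 2*u^3 + u^2 - 2*u + 1) * p*q*r

lemma det_Phi_vecMulVec (t : ℝ) (x : Fin 3 → ℝ) :
    (Phi t (vecMulVec x x)).det = (t^2 - 1)^2 * phiCubic (t^2) (x 0^2) (x 1^2) (x 2^2) := by
  simp only [Phi, det_fin_three, vecMulVec_apply, of_apply, cons_val', cons_val_zero,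
    cons_val_fin_one, cons_val_one, cons_val, phiCubic]
  ring

lemma phiCubic_rotate (u p q r : ℝ) : phiCubic u p q r = phiCubic u q r p := by
  unfold phiCubic; ring

lemma phiCubic_face (u p q : ℝ) : phiCubic u p q 0 = (u*p - q)^2 * (p + u^2*q) := by
  unfold phiCubic; ring

lemma two_mul_sum_mul_phiCubic (u p q r : ℝ) :
    2 * (p + q + r) * phiCubic u p q r =
      2 * (u^2 - u + 1) * (p*q * (q - u*p + (u-1)*r)^2 + q*r * (r - u*q + (u-1)*p)^2
          + r*p * (p - u*r + (u-1)*q)^2)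
        + (u*p^2 - u*r^2 - p*q + u^2*q*r + (1-u^2)*p*r)^2
        + (u*q^2 - u*p^2 - q*r + u^2*r*p + (1-u^2)*q*p)^2
        + (u*r^2 - u*q^2 - r*p + u^2*p*q + (1-u^2)*r*q)^2 := by
  unfold phiCubic; ring

lemma eq_mul_of_phiCubic_face_eq_zero {u p q : ℝ} (hu : u ≠ 0) (hp : 0 ≤ p) (hq : 0 ≤ q)
    (h : phiCubic u p q 0 = 0) : q = u * p := by
  rw [phiCubic_face] at h
  rcases mul_eq_zero.1 h with h | h
  · linear_combination -sq_eq_zero_iff.1 h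
  · have hq0 : q = 0 := by nlinarith [sq_pos_of_ne_zero hu]
    have hp0 : p = 0 := by linear_combination h - u^2 * hq0
    rw [hp0, hq0, mul_zero]

lemma eq_of_phiCubic_eq_zero_of_pos {u p q r : ℝ} (hp : 0 < p) (hq : 0 < q) (hr : 0 < r)
    (h : phiCubic u p q r = 0) : p = q ∧ q = r := by
  have hs : 0 < u^2 - u + 1 := by nlinarith [sq_nonneg (2*u - 1)]
  have hsos := two_mul_sum_mul_phiCubic u p q r
  rw [h, mul_zero] at hsos
  have hpq : 0 ≤ p*q * (q - u*p + (u-1)*r)^2 := by positivity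
  have hqr : 0 ≤ q*r * (r - u*q + (u-1)*p)^2 := by positivity
  have hrp : 0 ≤ r*p * (p - u*r + (u-1)*q)^2 := by positivity
  have hA := sq_nonneg (u*p^2 - u*r^2 - p*q + u^2*q*r + (1-u^2)*p*r)
  have hB := sq_nonneg (u*q^2 - u*p^2 - q*r + u^2*r*p + (1-u^2)*q*p)
  have hC := sq_nonneg (u*r^2 - u*q^2 - r*p + u^2*p*q + (1-u^2)*r*q)
  have hℓ₁ : (u^2 - u + 1) * (p*q * (q - u*p + (u-1)*r)^2) = 0 :=
    le_antisymm (by linarith [mul_nonneg hs.le hqr, mul_nonneg hs.le hrp]) (by positivity)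
  have hℓ₂ : (u^2 - u + 1) * (q*r * (r - u*q + (u-1)*p)^2) = 0 :=
    le_antisymm (by linarith [mul_nonneg hs.le hpq, mul_nonneg hs.le hrp]) (by positivity)
  simp only [mul_eq_zero, hp.ne', hq.ne', hr.ne', hs.ne', false_or, sq_eq_zero_iff] at hℓ₁ hℓ₂
  have hpr : (u^2 - u + 1) * (r - p) = 0 := by linear_combination hℓ₂ + u * hℓ₁
  obtain rfl : r = p := by linarith [(mul_eq_zero.1 hpr).resolve_left hs.ne']
  have hq : q = r := by linear_combination hℓ₁
  exact ⟨hq.symm, hq⟩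

lemma phiCubic_eq_zero {u p q r : ℝ} (hu : u ≠ 0) (hp : 0 ≤ p) (hq : 0 ≤ q) (hr : 0 ≤ r)
    (h : phiCubic u p q r = 0) :
    (p = q ∧ q = r) ∨ (r = 0 ∧ q = u * p) ∨ (p = 0 ∧ r = u * q) ∨ (q = 0 ∧ p = u * r) := by
  rcases hr.eq_or_lt with rfl | hr
  · exact Or.inr <| Or.inl ⟨rfl, eq_mul_of_phiCubic_face_eq_zero hu hp hq h⟩
  rcases hp.eq_or_lt with rfl | hp
  · rw [phiCubic_rotate] at h
    exact Or.inr <| Or.inr <| Or.inl ⟨rfl, eq_mul_of_phiCubic_face_eq_zero hu hq hr.le h⟩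
  rcases hq.eq_or_lt with rfl | hq
  · rw [← phiCubic_rotate] at h
    exact Or.inr <| Or.inr <| Or.inr ⟨rfl, eq_mul_of_phiCubic_face_eq_zero hu hr.le hp.le h⟩
  exact Or.inl (eq_of_phiCubic_eq_zero_of_pos hp hq hr h)

lemma eq_smul_vec3_iff {R : Type*} [Mul R] {x : Fin 3 → R} {c a b d : R} :
    x = c • ![a, b, d] ↔ x 0 = c * a ∧ x 1 = c * b ∧ x 2 = c * d := by
  constructor
  · rintro rfl
    simp
  · rintro ⟨h₀, h₁, h₂⟩
    ext i
    fin_cases i <;> simp [h₀, h₁, h₂]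

def singularDirections (t : ℝ) : List (Fin 3 → ℝ) :=
  [![1, 1, 1], ![1, 1, -1], ![1, -1, 1], ![-1, 1, 1],
    ![1, t, 0], ![1, -t, 0], ![0, 1, t], ![0, 1, -t], ![t, 0, 1], ![-t, 0, 1]]

lemma eq_mul_or_eq_neg_mul_of_sq_eq {R : Type*} [CommRing R] [NoZeroDivisors R] {t a b : R}
    (h : b^2 = t^2 * a^2) :
    b = t * a ∨ b = -(t * a) :=
  sq_eq_sq_iff_eq_or_eq_neg.1 (by rw [h, mul_pow])

lemma exists_smul_mem_singularDirections {t : ℝ} {x : Fin 3 → ℝ} (hx : x ≠ 0)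
    (h : (x 0^2 = x 1^2 ∧ x 1^2 = x 2^2) ∨ (x 2^2 = 0 ∧ x 1^2 = t^2 * x 0^2) ∨
      (x 0^2 = 0 ∧ x 2^2 = t^2 * x 1^2) ∨ (x 1^2 = 0 ∧ x 0^2 = t^2 * x 2^2)) :
    ∃ c : ℝ, c ≠ 0 ∧ ∃ u ∈ singularDirections t, x = c • u := by
  have hx' : ¬(x 0 = 0 ∧ x 1 = 0 ∧ x 2 = 0) := fun ⟨h₀, h₁, h₂⟩ =>
    hx (by ext i; fin_cases i <;> assumption)
  simp only [sq_eq_zero_iff] at h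
  rcases h with ⟨hs₁, hs₂⟩ | ⟨h₂, hs₁⟩ | ⟨h₀, hs₂⟩ | ⟨h₁, hs₀⟩
  · rcases sq_eq_sq_iff_eq_or_eq_neg.1 hs₁.symm with h₁ | h₁ <;>
      rcases sq_eq_sq_iff_eq_or_eq_neg.1 (hs₁.trans hs₂).symm with h₂ | h₂ <;>
      have h₀ : x 0 ≠ 0 := fun h₀ => hx' ⟨h₀, by simp [h₀, h₁], by simp [h₀, h₂]⟩
    · exact ⟨x 0, h₀, ![1, 1, 1], by simp [singularDirections],
        eq_smul_vec3_iff.2 (by simp [h₁, h₂])⟩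
    · exact ⟨x 0, h₀, ![1, 1, -1], by simp [singularDirections],
        eq_smul_vec3_iff.2 (by simp [h₁, h₂])⟩
    · exact ⟨x 0, h₀, ![1, -1, 1], by simp [singularDirections],
        eq_smul_vec3_iff.2 (by simp [h₁, h₂])⟩
    · exact ⟨-x 0, neg_ne_zero.2 h₀, ![-1, 1, 1], by simp [singularDirections],
        eq_smul_vec3_iff.2 (by simp [h₁, h₂])⟩
  · rcases eq_mul_or_eq_neg_mul_of_sq_eq hs₁ with h₁ | h₁ <;>
      have h₀ : x 0 ≠ 0 := fun h₀ => hx' ⟨h₀, by simp [h₀, h₁], h₂⟩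
    · exact ⟨x 0, h₀, ![1, t, 0], by simp [singularDirections],
        eq_smul_vec3_iff.2 (by simp [h₁, h₂, mul_comm])⟩
    · exact ⟨x 0, h₀, ![1, -t, 0], by simp [singularDirections],
        eq_smul_vec3_iff.2 (by simp [h₁, h₂, mul_comm])⟩
  · rcases eq_mul_or_eq_neg_mul_of_sq_eq hs₂ with h₂ | h₂ <;>
      have h₁ : x 1 ≠ 0 := fun h₁ => hx' ⟨h₀, h₁, by simp [h₁, h₂]⟩
    · exact ⟨x 1, h₁, ![0, 1, t], by simp [singularDirections],
        eq_smul_vec3_iff.2 (by simp [h₀, h₂, mul_comm])⟩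
    · exact ⟨x 1, h₁, ![0, 1, -t], by simp [singularDirections],
        eq_smul_vec3_iff.2 (by simp [h₀, h₂, mul_comm])⟩
  · rcases eq_mul_or_eq_neg_mul_of_sq_eq hs₀ with h₀ | h₀ <;>
      have h₂ : x 2 ≠ 0 := fun h₂ => hx' ⟨by simp [h₀, h₂], h₁, h₂⟩
    · exact ⟨x 2, h₂, ![t, 0, 1], by simp [singularDirections],
        eq_smul_vec3_iff.2 (by simp [h₀, h₁, mul_comm])⟩
    · exact ⟨x 2, h₂, ![-t, 0, 1], by simp [singularDirections],
        eq_smul_vec3_iff.2 (by simp [h₀, h₁, mul_comm])⟩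

lemma det_Phi_smul_of_mem_singularDirections {t c : ℝ} {u : Fin 3 → ℝ}
    (hu : u ∈ singularDirections t) : (Phi t (vecMulVec (c • u) (c • u))).det = 0 := by
  rw [det_Phi_vecMulVec, mul_eq_zero]
  right
  simp only [singularDirections, List.mem_cons, List.not_mem_nil, or_false] at hu
  rcases hu with rfl | rfl | rfl | rfl | rfl | rfl | rfl | rfl | rfl | rfl <;>
    simp only [phiCubic, smul_vec3, smul_eq_mul, cons_val_zero, cons_val_one, cons_val] <;>
    ring

/-- For `t ∉ {-1, 0, 1}` and nonzero `x ∈ ℝ³`, `det Φ_t(xxᵀ) = 0` iff `x` is a nonzero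
scalar multiple of one of ten specific vectors. -/
theorem det_phi_eq_zero_iff (t : ℝ) (ht : t ∉ ({-1, 0, 1} : Set ℝ))
    (x : Fin 3 → ℝ) (hx : x ≠ 0) :
    (Phi t (vecMulVec x x)).det = 0 ↔
      ∃ c : ℝ, c ≠ 0 ∧ ∃ u ∈ [![(1:ℝ), 1, 1], ![1, 1, -1], ![1, -1, 1], ![-1, 1, 1],
        ![1, t, 0], ![1, -t, 0], ![0, 1, t], ![0, 1, -t], ![t, 0, 1], ![-t, 0, 1]],
        x = c • u := by
  simp only [Set.mem_insert_iff, Set.mem_singleton_iff, not_or] at ht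
  obtain ⟨htn₁, ht₀, ht₁⟩ := ht
  have hdet : (t^2 - 1)^2 ≠ 0 := pow_ne_zero 2 <| sub_ne_zero.2 fun h =>
    (sq_eq_one_iff.1 h).elim ht₁ htn₁
  constructor
  · intro h
    rw [det_Phi_vecMulVec, mul_eq_zero, or_iff_right hdet] at h
    exact exists_smul_mem_singularDirections hx <| phiCubic_eq_zero (pow_ne_zero 2 ht₀)
      (sq_nonneg _) (sq_nonneg _) (sq_nonneg _) h
  · rintro ⟨c, -, u, hu, rfl⟩
    exact det_Phi_smul_of_mem_singularDirections hu
end
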